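/- arXiv:math-ph/0201059 — 2 statements merged into one kernel-verified Lean document; each statement's English description precedes it below -/
import Mathlib

section
/- Let N = 2r and t = exp(iπ/N). Define abstract operators C(p,q) acting on the free ℂ-module with basis {e_j : j ∈ ℤ/2rℤ extended with relations e_{r+k} = -e_{r-k}, e_r = 0, e_{j+2r} = e_j} by C(p,q) e_k = t^{-pq}(t^{2qk} e_{k-p} + t^{-2qk} e_{k+p}). Then the product-to-sum formula holds: C(m,n) ∘ C(p,q) = t^{mq - np} C(m+p, n+q) + t^{-(mq-np)} C(m-p, n-q) as operators. -/
open Complex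

/-- Let `N = 2r` and `t = exp(iπ/N)`. On a `ℂ`-vector space `V`
spanned by vectors `e j`, `j ∈ ℤ`, subject to `e (j+2r) = e j` and
`e (r+k) = -e (r-k)`, the operators `C p q` determined by
`C p q (e k) = t^{-pq} (t^{2qk} e (k-p) + t^{-2qk} e (k+p))` satisfy the
product-to-sum formula
`C m n ∘ C p q = t^{mq-np} • C (m+p) (n+q) + t^{-(mq-np)} • C (m-p) (n-q)`. -/
theorem stmt11 (r : ℕ) (hr : 2 ≤ r)
    (t : ℂ) (ht : t = Complex.exp ((Real.pi : ℂ) * Complex.I / (2 * r)))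
    (V : Type*) [AddCommGroup V] [Module ℂ V]
    (e : ℤ → V)
    (hper : ∀ j : ℤ, e (j + 2 * r) = e j)
    (hsym : ∀ k : ℤ, e ((r : ℤ) + k) = -e ((r : ℤ) - k))
    (hspan : Submodule.span ℂ (Set.range e) = ⊤)
    (C : ℤ → ℤ → V →ₗ[ℂ] V)
    (hC : ∀ p q k : ℤ, C p q (e k)
      = t ^ (-(p * q)) • (t ^ (2 * q * k) • e (k - p) + t ^ (-(2 * q * k)) • e (k + p))) :
    ∀ m n p q : ℤ,
      (C m n) ∘ₗ (C p q)
        = t ^ (m * q - n * p) • C (m + p) (n + q)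
          + t ^ (-(m * q - n * p)) • C (m - p) (n - q) := by
  have ht0 : t ≠ 0 := by rw [ht]; exact Complex.exp_ne_zero _
  intro m n p q
  apply LinearMap.ext_on hspan
  rintro _ ⟨k, rfl⟩
  simp only [LinearMap.comp_apply, LinearMap.add_apply, LinearMap.smul_apply, hC, map_add,
    map_smul, smul_add, smul_smul, ← zpow_add₀ ht0]
  ring_nf
  module
end

section
/- Let t = exp(iπ/N) with N = 2r. The formal product-to-sum formula t^{|mn;pq|}C(m+p,n+q) + t^{-|mn;pq|}C(m−p,n−q), where |mn;pq| = mq − np, defines an associative product on the ℂ-span of symbols C(p,q) with relation C(p,q) = C(−p,−q): i.e., (C(a,b)*C(c,d))*C(e,f) = C(a,b)*(C(c,d)*C(e,f)) for all integers a,b,c,d,e,f. -/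
/-- on the `ℂ`-span of symbols `D p q` subject to `D p q = D (-p) (-q)`,
the bilinear product
`D m n * D p q = t^{mq−np} D (m+p) (n+q) + t^{−(mq−np)} D (m−p) (n−q)`
is associative: `(D a b * D c d) * D e f = D a b * (D c d * D e f)`, written out
by bilinearity. -/
theorem stmt16 (t : ℂ) (ht : t ≠ 0)
    (V : Type*) [AddCommGroup V] [Module ℂ V]
    (D : ℤ → ℤ → V) (hD : ∀ p q : ℤ, D p q = D (-p) (-q))
    (a b c d e f : ℤ) :
    t ^ (a * d - b * c) •
        (t ^ ((a + c) * f - (b + d) * e) • D (a + c + e) (b + d + f)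
          + t ^ (-((a + c) * f - (b + d) * e)) • D (a + c - e) (b + d - f))
      + t ^ (-(a * d - b * c)) •
        (t ^ ((a - c) * f - (b - d) * e) • D (a - c + e) (b - d + f)
          + t ^ (-((a - c) * f - (b - d) * e)) • D (a - c - e) (b - d - f))
    = t ^ (c * f - d * e) •
        (t ^ (a * (d + f) - b * (c + e)) • D (a + (c + e)) (b + (d + f))
          + t ^ (-(a * (d + f) - b * (c + e))) • D (a - (c + e)) (b - (d + f)))
      + t ^ (-(c * f - d * e)) •
        (t ^ (a * (d - f) - b * (c - e)) • D (a + (c - e)) (b + (d - f))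
          + t ^ (-(a * (d - f) - b * (c - e))) • D (a - (c - e)) (b - (d - f))) := by
  simp only [smul_add, smul_smul, ← zpow_add₀ ht]
  ring_nf
  abel
end
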